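/- Closed-form splitting subproblem: given y_c ∈ Δ, the equation (e^T y)^{k-2} y = α P̄ y_c^{k-1} + v has the unique solution y = (1 + α e^T(P̄ y_c^{k-1}))^{−(k−2)/(k−1)} (α P̄ y_c^{k-1} + v) among nonnegative vectors, i.e., y = Φ(y_c), and this solution lies in Δ. -/

import Mathlib

open Finset Real

noncomputable def contr {n m : ℕ} (P : Fin n → (Fin m → Fin n) → ℝ) (y : Fin n → ℝ) : Fin n → ℝ :=
  fun i => ∑ j : Fin m → Fin n, P i j * ∏ s, y (j s)

noncomputable def Phi {n : ℕ} (k : ℕ) (P : Fin n → (Fin (k-1) → Fin n) → ℝ) (v : Fin n → ℝ)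
    (α : ℝ) (y : Fin n → ℝ) : Fin n → ℝ :=
  fun i => (1 + α * ∑ l, contr P y l) ^ (-((k:ℝ)-2)/((k:ℝ)-1)) * (v i + α * contr P y i)

/-!
Write `b = α P̄ y_c^{k-1} + v`, `S = e^T b = 1 + α e^T(P̄ y_c^{k-1})` and `m = k - 2`. Summing the
equation `(e^T y)^m y = b` over the coordinates gives `(e^T y)^{m+1} = S`, so for `y ≥ 0` the
scalar `e^T y` is forced to be the root `r = S^{1/(m+1)}` and then `y = r^{-m} b`, which is `Φ(y_c)`.
Membership in `Δ` is `r^{m+1} ≤ (1-α)^{-1}`: since `P̄` is columnwise substochastic,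
`e^T(P̄ y_c^{m+1}) ≤ (e^T y_c)^{m+1} ≤ (1-α)^{-1}`, hence `S ≤ 1 + α (1-α)^{-1} = (1-α)^{-1}`.
-/

section Contraction

variable {n m : ℕ} {P : Fin n → (Fin m → Fin n) → ℝ} {y : Fin n → ℝ}

lemma contr_nonneg (hP : ∀ i j, 0 ≤ P i j) (hy : ∀ i, 0 ≤ y i) (i : Fin n) :
    0 ≤ contr P y i :=
  sum_nonneg fun j _ => mul_nonneg (hP i j) (prod_nonneg fun s _ => hy (j s))

lemma sum_contr_le_sum_pow (hP : ∀ j, ∑ i, P i j ≤ 1) (hy : ∀ i, 0 ≤ y i) :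
    ∑ i, contr P y i ≤ (∑ i, y i) ^ m := by
  calc ∑ i, contr P y i = ∑ j : Fin m → Fin n, (∑ i, P i j) * ∏ s, y (j s) := by
        simp only [contr, sum_mul]
        exact sum_comm
    _ ≤ ∑ j : Fin m → Fin n, ∏ s, y (j s) :=
        sum_le_sum fun j _ => mul_le_of_le_one_left (prod_nonneg fun s _ => hy (j s)) (hP j)
    _ = (∑ i, y i) ^ m := by rw [sum_pow', Fintype.piFinset_univ]

lemma one_add_mul_sum_contr_le {α : ℝ} (hP : ∀ j, ∑ i, P i j ≤ 1) (hy : ∀ i, 0 ≤ y i)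
    (hα0 : 0 ≤ α) (hα1 : α < 1) (hyΔ : (∑ i, y i) ^ m ≤ (1 - α)⁻¹) :
    1 + α * ∑ i, contr P y i ≤ (1 - α)⁻¹ := by
  have h1α : 1 - α ≠ 0 := by linarith
  calc 1 + α * ∑ i, contr P y i ≤ 1 + α * (1 - α)⁻¹ := by
        gcongr
        exact (sum_contr_le_sum_pow hP hy).trans hyΔ
    _ = (1 - α)⁻¹ := by field_simp; ring

end Contraction

lemma le_rpow_neg_one_div_iff {x c : ℝ} {d : ℕ} (hx : 0 ≤ x) (hc : 0 < c) (hd : d ≠ 0) :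
    x ≤ c ^ (-1 / (d : ℝ)) ↔ x ^ d ≤ c⁻¹ := by
  rw [neg_div, rpow_neg hc.le, ← inv_rpow hc.le, one_div,
    le_rpow_inv_iff_of_pos hx (inv_nonneg.mpr hc.le) (by positivity), rpow_natCast]

lemma rpow_neg_div_succ_eq {S : ℝ} (hS : 0 ≤ S) (m : ℕ) :
    S ^ (-(m : ℝ) / ((m + 1 : ℕ) : ℝ)) = ((S ^ ((m + 1 : ℕ) : ℝ)⁻¹) ^ m)⁻¹ := by
  rw [neg_div, rpow_neg hS, ← rpow_natCast, ← rpow_mul hS, inv_mul_eq_div]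

section PowerEquation

variable {ι : Type*} [Fintype ι] {m : ℕ} {b : ι → ℝ} {r : ℝ}

lemma sum_inv_pow_mul_eq (hr : 0 < r) (hrb : r ^ (m + 1) = ∑ i, b i) :
    ∑ i, (r ^ m)⁻¹ * b i = r := by
  rw [← mul_sum, ← hrb, pow_succ, inv_mul_cancel_left₀ (pow_pos hr m).ne']

lemma sum_pow_mul_inv_pow_mul (hr : 0 < r) (hrb : r ^ (m + 1) = ∑ i, b i) (i : ι) :
    (∑ l, (r ^ m)⁻¹ * b l) ^ m * ((r ^ m)⁻¹ * b i) = b i := by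
  rw [sum_inv_pow_mul_eq hr hrb, mul_inv_cancel_left₀ (pow_pos hr m).ne']

lemma eq_inv_pow_mul_of_sum_pow_mul_eq (hr : 0 < r) (hrb : r ^ (m + 1) = ∑ i, b i)
    {y : ι → ℝ} (hy : ∀ i, 0 ≤ y i) (h : ∀ i, (∑ l, y l) ^ m * y i = b i) :
    y = fun i => (r ^ m)⁻¹ * b i := by
  have hsum : (∑ l, y l) ^ (m + 1) = r ^ (m + 1) := by
    rw [hrb, ← sum_congr rfl fun i _ => h i, ← mul_sum, pow_succ]
  have hroot : ∑ l, y l = r :=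
    (pow_left_inj₀ (sum_nonneg fun l _ => hy l) hr.le (Nat.succ_ne_zero m)).mp hsum
  funext i
  rw [← h i, hroot, inv_mul_cancel_left₀ (pow_pos hr m).ne']

end PowerEquation

theorem splitting_closed_form_general (n k : ℕ) (hk : 2 ≤ k)
    (P : Fin n → (Fin (k-1) → Fin n) → ℝ)
    (hP0 : ∀ i j, 0 ≤ P i j) (hPs : ∀ j, ∑ i, P i j ≤ 1)
    (v : Fin n → ℝ) (hv0 : ∀ i, 0 ≤ v i) (hv1 : ∑ i, v i = 1)
    (α : ℝ) (hα0 : 0 ≤ α) (hα1 : α < 1)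
    (yc : Fin n → ℝ) (hyc0 : ∀ i, 0 ≤ yc i)
    (hycΔ : ∑ i, yc i ≤ (1 - α) ^ (-(1:ℝ)/((k:ℝ)-1))) :
    (∀ i, (∑ l, Phi k P v α yc l) ^ (k-2) * Phi k P v α yc i =
        α * contr P yc i + v i) ∧
    (∀ i, Phi k P v α yc i =
        (∑ l, (α * contr P yc l + v l)) ^ (-((k:ℝ)-2)/((k:ℝ)-1)) *
          (α * contr P yc i + v i)) ∧
    (∀ i, 0 ≤ Phi k P v α yc i) ∧
    (∑ i, Phi k P v α yc i ≤ (1 - α) ^ (-(1:ℝ)/((k:ℝ)-1))) ∧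
    (∀ y : Fin n → ℝ, (∀ i, 0 ≤ y i) →
      (∀ i, (∑ l, y l) ^ (k-2) * y i = α * contr P yc i + v i) →
      y = Phi k P v α yc) := by
  obtain ⟨m, rfl⟩ : ∃ m, k = m + 2 := ⟨k - 2, by omega⟩
  have hroot_index : ((m + 2 : ℕ) : ℝ) - 1 = ((m + 1 : ℕ) : ℝ) := by push_cast; ring
  have hpow_index : -(((m + 2 : ℕ) : ℝ) - 2) = -(m : ℝ) := by push_cast; ring
  have h1α : 0 < 1 - α := by linarith
  set b : Fin n → ℝ := fun i => α * contr P yc i + v i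
  have hb0 : ∀ i, 0 ≤ b i := fun i => add_nonneg (mul_nonneg hα0 (contr_nonneg hP0 hyc0 i)) (hv0 i)
  set S := ∑ i, b i
  have hS : S = 1 + α * ∑ l, contr P yc l := by
    simp only [S, b, sum_add_distrib, ← mul_sum, hv1]; ring
  have hS_pos : 0 < S := hS ▸ add_pos_of_pos_of_nonneg one_pos
    (mul_nonneg hα0 (sum_nonneg fun l _ => contr_nonneg hP0 hyc0 l))
  have hS0 : 0 ≤ S := hS_pos.le
  set r := S ^ ((m + 1 : ℕ) : ℝ)⁻¹
  have hr : 0 < r := rpow_pos_of_pos hS_pos _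
  have hrS : r ^ (m + 1) = S := rpow_inv_natCast_pow hS0 (Nat.succ_ne_zero m)
  have hPhi : Phi (m + 2) P v α yc = fun i => (r ^ m)⁻¹ * b i := by
    funext i
    simp only [Phi, hroot_index, hpow_index, ← hS, rpow_neg_div_succ_eq hS0, r, b]
    ring
  rw [hroot_index] at hycΔ ⊢
  rw [hpow_index, hPhi]
  refine ⟨sum_pow_mul_inv_pow_mul hr hrS, fun i => by rw [rpow_neg_div_succ_eq hS0],
    fun i => mul_nonneg (inv_nonneg.mpr (pow_nonneg hr.le m)) (hb0 i), ?_,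
    fun y hy h => eq_inv_pow_mul_of_sum_pow_mul_eq hr hrS hy h⟩
  have hycpow :=
    (le_rpow_neg_one_div_iff (sum_nonneg fun i _ => hyc0 i) h1α m.succ_ne_zero).mp hycΔ
  rw [sum_inv_pow_mul_eq hr hrS, le_rpow_neg_one_div_iff hr.le h1α m.succ_ne_zero, hrS, hS]
  exact one_add_mul_sum_contr_le hPs hyc0 hα0 hα1 hycpow

theorem splitting_closed_form (n k : ℕ) (hn : 0 < n) (hk : 2 ≤ k)
    (P : Fin n → (Fin (k-1) → Fin n) → ℝ)
    (hP0 : ∀ i j, 0 ≤ P i j) (hPs : ∀ j, ∑ i, P i j ≤ 1)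
    (v : Fin n → ℝ) (hv0 : ∀ i, 0 ≤ v i) (hv1 : ∑ i, v i = 1)
    (α : ℝ) (hα0 : 0 ≤ α) (hα1 : α < 1)
    (yc : Fin n → ℝ) (hyc0 : ∀ i, 0 ≤ yc i)
    (hycΔ : ∑ i, yc i ≤ (1 - α) ^ (-(1:ℝ)/((k:ℝ)-1))) :
    (∀ i, (∑ l, Phi k P v α yc l) ^ (k-2) * Phi k P v α yc i =
        α * contr P yc i + v i) ∧
    (∀ i, Phi k P v α yc i =
        (∑ l, (α * contr P yc l + v l)) ^ (-((k:ℝ)-2)/((k:ℝ)-1)) *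
          (α * contr P yc i + v i)) ∧
    (∀ i, 0 ≤ Phi k P v α yc i) ∧
    (∑ i, Phi k P v α yc i ≤ (1 - α) ^ (-(1:ℝ)/((k:ℝ)-1))) ∧
    (∀ y : Fin n → ℝ, (∀ i, 0 ≤ y i) →
      (∀ i, (∑ l, y l) ^ (k-2) * y i = α * contr P yc i + v i) →
      y = Phi k P v α yc) :=
  splitting_closed_form_general n k hk P hP0 hPs v hv0 hv1 α hα0 hα1 yc hyc0 hycΔ
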